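/- Let 0 < μ ≤ 1, ζ > 0, ϑ ≥ μζ, 0 < θ ≤ 1, λ > 0, let (Ω, F, ℙ) be a probability space and H : Ω → [0,∞) a random variable with 𝔼[E_{μ,ϑ}^{ζ}(2λ H^θ)] < ∞. Then the TCFCP pmf z(n) = 𝔼[P(n,H)] satisfies ∑_{n=0}^∞ z(n) = 1, and consequently 1 − ∑_{n=1}^∞ z(n) = z(0) = Γ(ϑ) ∑_{k=0}^∞ ( (−λ)^k (ζ)_k / (k! Γ(μk+ϑ)) ) · 𝔼[H^{θk}]. -/

import Mathlib

open Real MeasureTheory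

/-- Rising factorial (Pochhammer symbol) `(ζ)_n = Γ(ζ+n)/Γ(ζ)`. -/
noncomputable def risingFactorial (ζ : ℝ) (n : ℕ) : ℝ :=
  Real.Gamma (ζ + n) / Real.Gamma ζ

/-- Three-parameter (Prabhakar) Mittag-Leffler function. -/
noncomputable def mittagLeffler (μ ϑ ζ z : ℝ) : ℝ :=
  ∑' m : ℕ, risingFactorial ζ m * z ^ m / (m.factorial * Real.Gamma (μ * m + ϑ))

/-- Probability function of the fractional counting process. -/
noncomputable def fcpP (μ ϑ ζ θ lam : ℝ) (n : ℕ) (t : ℝ) : ℝ :=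
  risingFactorial ζ n * Real.Gamma ϑ * (lam * t ^ θ) ^ n / n.factorial *
    ∑' k : ℕ, risingFactorial (ζ + n) k * (-(lam * t ^ θ)) ^ k /
      (k.factorial * Real.Gamma (μ * (n + k : ℕ) + ϑ))

/-!
Put `x = λ t^θ` and `c_m = Γ(ϑ) (ζ)_m / Γ(μm+ϑ)`. Expanding the inner series,
`P(n,t) = ∑_k c_{n+k} x^n (-x)^k / (n! k!)`. Grouped along the antidiagonals `n + k = m`,
this double series collapses by the binomial theorem to `∑_m c_m (x - x)^m / m! = c_0 = 1`.
The same grouping of the absolute values gives `Γ(ϑ) E_{μ,ϑ}^ζ(2x)`, which is finite because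
`Γ(s) ≥ a^{s-1} e^{-a}` for every `a ≥ 0` and `s ≥ 1`. So the integrability of
`E_{μ,ϑ}^ζ(2λH^θ)` lets dominated convergence exchange `𝔼` with the sum over `n`, and, for
`z(0)`, with the sum over `k`.
-/

open Filter Finset
open scoped Nat

theorem Real.rpow_mul_exp_neg_le_Gamma {s a : ℝ} (hs : 1 ≤ s) (ha : 0 ≤ a) :
    a ^ (s - 1) * exp (-a) ≤ Gamma s := by
  have hint := GammaIntegral_convergent (zero_lt_one.trans_le hs)
  calc a ^ (s - 1) * exp (-a) = ∫ x in Set.Ioi a, exp (-x) * a ^ (s - 1) := by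
        rw [integral_mul_const, integral_exp_neg_Ioi, mul_comm]
    _ ≤ ∫ x in Set.Ioi a, exp (-x) * x ^ (s - 1) :=
        setIntegral_mono_on ((integrableOn_exp_neg_Ioi a).mul_const _)
          (hint.mono_set (Set.Ioi_subset_Ioi ha)) measurableSet_Ioi fun x hx =>
            mul_le_mul_of_nonneg_left (rpow_le_rpow ha (le_of_lt hx) (by linarith)) (exp_pos _).le
    _ ≤ ∫ x in Set.Ioi 0, exp (-x) * x ^ (s - 1) :=
        setIntegral_mono_set hint
          (ae_restrict_of_forall_mem measurableSet_Ioi fun x hx =>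
            mul_nonneg (exp_pos _).le (rpow_nonneg (le_of_lt hx) _))
          (Set.Ioi_subset_Ioi ha).eventuallyLE
    _ = Gamma s := (Gamma_eq_integral (zero_lt_one.trans_le hs)).symm

theorem sum_antidiagonal_pow_div_factorial_mul {K : Type*} [Field K] [CharZero K] (a b : K)
    (m : ℕ) :
    ∑ p ∈ antidiagonal m, a ^ p.1 / p.1 ! * (b ^ p.2 / p.2 !) = (a + b) ^ m / m ! := by
  rw [(Commute.all a b).add_pow', sum_div]
  refine sum_congr rfl fun p hp => ?_
  have hfac : ((p.1 + p.2)! : K) ≠ 0 := mod_cast (p.1 + p.2).factorial_ne_zero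
  rw [← mem_antidiagonal.mp hp, nsmul_eq_mul, Nat.cast_add_choose]
  field_simp

section antidiagonal

variable {A : Type*} [AddMonoid A] [HasAntidiagonal A]

theorem summable_norm_of_summable_sum_norm_antidiagonal {E : Type*} [SeminormedAddCommGroup E]
    {f : A × A → E} (h : Summable fun n => ∑ p ∈ antidiagonal n, ‖f p‖) :
    Summable fun p => ‖f p‖ := by
  rw [← HasAntidiagonal.sigmaAntidiagonalEquivProd.summable_iff]
  refine (summable_sigma_of_nonneg fun _ => norm_nonneg _).2 ⟨fun _ => .of_finite, ?_⟩
  convert h using 2 with n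
  exact (tsum_fintype _).trans ((antidiagonal n).sum_coe_sort fun p => ‖f p‖)

theorem Summable.hasSum_sum_antidiagonal {α : Type*} [AddCommMonoid α] [TopologicalSpace α]
    [ContinuousAdd α] [RegularSpace α] {f : A × A → α} (hf : Summable f) :
    HasSum (fun n => ∑ p ∈ antidiagonal n, f p) (∑' p, f p) :=
  (HasAntidiagonal.sigmaAntidiagonalEquivProd.hasSum_iff.2 hf.hasSum).sigma
    fun n => (antidiagonal n).hasSum f

end antidiagonal

section doubleSeries

variable {Ω E : Type*} [MeasurableSpace Ω] {P : Measure Ω} [NormedAddCommGroup E]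

theorem MeasureTheory.AEStronglyMeasurable.tsum_of_summable {f : ℕ → Ω → E}
    (hf : ∀ n, AEStronglyMeasurable (f n) P) (hs : ∀ ω, Summable fun n => f n ω) :
    AEStronglyMeasurable (fun ω => ∑' n, f n ω) P :=
  aestronglyMeasurable_of_tendsto_ae atTop
    (fun _ => Finset.aestronglyMeasurable_fun_sum _ fun n _ => hf n)
    (ae_of_all _ fun ω => (hs ω).hasSum.tendsto_sum_nat)

variable [NormedSpace ℝ E] [CompleteSpace E] {f : ℕ × ℕ → Ω → E}
  (hf : ∀ p, AEStronglyMeasurable (f p) P) (hs : ∀ ω, Summable fun p => ‖f p ω‖)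
  (hi : Integrable (fun ω => ∑' p, ‖f p ω‖) P)
include hf hs hi

theorem hasSum_integral_tsum_row :
    HasSum (fun n => ∫ ω, ∑' k, f (n, k) ω ∂P) (∫ ω, ∑' p, f p ω ∂P) :=
  hasSum_integral_of_dominated_convergence (fun n ω => ∑' k, ‖f (n, k) ω‖)
    (fun n => .tsum_of_summable (fun k => hf (n, k)) fun ω => (hs ω).of_norm.prod_factor n)
    (fun n => ae_of_all _ fun ω => norm_tsum_le_tsum_norm ((hs ω).prod_factor n))
    (ae_of_all _ fun ω => (hs ω).prod)
    (hi.congr (ae_of_all _ fun ω => (hs ω).tsum_prod' (hs ω).prod_factor))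
    (ae_of_all _ fun ω => (hs ω).of_norm.hasSum.prod_fiberwise
      fun n => ((hs ω).of_norm.prod_factor n).hasSum)

theorem hasSum_integral_row (n : ℕ) :
    HasSum (fun k => ∫ ω, f (n, k) ω ∂P) (∫ ω, ∑' k, f (n, k) ω ∂P) := by
  have hrow_norm : Integrable (fun ω => ∑' k, ‖f (n, k) ω‖) P := by
    refine hi.mono' (.tsum_of_summable (fun k => (hf (n, k)).norm)
      fun ω => (hs ω).prod_factor n) (ae_of_all _ fun ω => ?_)
    rw [Real.norm_of_nonneg (tsum_nonneg fun _ => norm_nonneg _)]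
    exact tsum_comp_le_tsum_of_inj (hs ω) (fun _ => norm_nonneg _) (Prod.mk_right_injective n)
  exact hasSum_integral_of_dominated_convergence (fun k ω => ‖f (n, k) ω‖)
    (fun k => hf (n, k)) (fun k => ae_of_all _ fun ω => le_rfl)
    (ae_of_all _ fun ω => (hs ω).prod_factor n) hrow_norm
    (ae_of_all _ fun ω => ((hs ω).of_norm.prod_factor n).hasSum)

end doubleSeries

section risingFactorial

variable {ζ : ℝ} (hζ : 0 < ζ)
include hζ

theorem risingFactorial_zero : risingFactorial ζ 0 = 1 := by
  simp [risingFactorial, (Gamma_pos_of_pos hζ).ne']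

theorem risingFactorial_pos (n : ℕ) : 0 < risingFactorial ζ n :=
  div_pos (Gamma_pos_of_pos (by positivity)) (Gamma_pos_of_pos hζ)

theorem risingFactorial_mul_risingFactorial_add (n k : ℕ) :
    risingFactorial ζ n * risingFactorial (ζ + n) k = risingFactorial ζ (n + k) := by
  have hΓ : Gamma (ζ + n) ≠ 0 := (Gamma_pos_of_pos (by positivity)).ne'
  rw [risingFactorial, risingFactorial, risingFactorial, Nat.cast_add, add_assoc]
  field_simp

theorem risingFactorial_succ (n : ℕ) :
    risingFactorial ζ (n + 1) = risingFactorial ζ n * (ζ + n) := by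
  rw [← risingFactorial_mul_risingFactorial_add hζ]
  congr 1
  rw [risingFactorial, Nat.cast_one, Gamma_add_one (by positivity),
    mul_div_cancel_right₀ _ (Gamma_pos_of_pos (by positivity)).ne']

theorem risingFactorial_le_pow_mul_factorial (n : ℕ) :
    risingFactorial ζ n ≤ (ζ + 1) ^ n * n ! := by
  induction n with
  | zero => simp [risingFactorial_zero hζ]
  | succ n ih =>
    rw [risingFactorial_succ hζ, pow_succ, Nat.factorial_succ, Nat.cast_mul, Nat.cast_succ]
    have : ζ + n ≤ (ζ + 1) * (n + 1) := by nlinarith [(n.cast_nonneg : (0 : ℝ) ≤ n)]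
    calc risingFactorial ζ n * (ζ + n) ≤ (ζ + 1) ^ n * n ! * ((ζ + 1) * (n + 1)) :=
          mul_le_mul ih this (by positivity) (by positivity)
      _ = _ := by ring

end risingFactorial

noncomputable def mittagLefflerTerm (μ ϑ ζ z : ℝ) (m : ℕ) : ℝ :=
  risingFactorial ζ m * z ^ m / (m ! * Gamma (μ * m + ϑ))

theorem mittagLeffler_eq_tsum (μ ϑ ζ z : ℝ) :
    mittagLeffler μ ϑ ζ z = ∑' m, mittagLefflerTerm μ ϑ ζ z m :=
  rfl

theorem summable_mittagLefflerTerm {μ ζ : ℝ} (hμ : 0 < μ) (hζ : 0 < ζ) (ϑ y : ℝ) :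
    Summable (mittagLefflerTerm μ ϑ ζ y) := by
  set B := 2 * ((ζ + 1) * (|y| + 1))
  -- `a ^ μ = B`, so the bound `Γ(s) ≥ a^(s-1) e^(-a)` at `s = μm + ϑ` grows like `B ^ m`.
  set a := B ^ μ⁻¹
  have hB : 0 < B := by positivity
  have ha : 0 < a := by positivity
  have hlarge : ∀ᶠ m : ℕ in atTop, 1 ≤ μ * m + ϑ :=
    (tendsto_natCast_atTop_atTop.const_mul_atTop hμ |>.atTop_add
      tendsto_const_nhds).eventually_ge_atTop 1
  refine .of_norm_bounded_eventually_nat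
    (summable_geometric_two.mul_left (a ^ (ϑ - 1) * exp (-a))⁻¹) ?_
  filter_upwards [hlarge] with m hm
  have hΓ : a ^ (ϑ - 1) * exp (-a) * B ^ m ≤ Gamma (μ * m + ϑ) := by
    convert rpow_mul_exp_neg_le_Gamma hm ha.le using 1
    rw [show μ * m + ϑ - 1 = (ϑ - 1) + μ * m by ring, rpow_add ha, rpow_mul ha.le,
      rpow_inv_rpow hB.le hμ.ne', rpow_natCast]
    ring
  have hrf : risingFactorial ζ m * |y| ^ m / m ! ≤ ((ζ + 1) * (|y| + 1)) ^ m := by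
    rw [div_le_iff₀ (by positivity), mul_pow, mul_right_comm]
    exact mul_le_mul (risingFactorial_le_pow_mul_factorial hζ m)
      (pow_le_pow_left₀ (abs_nonneg y) (by linarith) m) (by positivity) (by positivity)
  have hΓpos : 0 < a ^ (ϑ - 1) * exp (-a) * B ^ m := by positivity
  calc ‖mittagLefflerTerm μ ϑ ζ y m‖
      = risingFactorial ζ m * |y| ^ m / m ! / Gamma (μ * m + ϑ) := by
        rw [mittagLefflerTerm, norm_div, norm_mul, norm_mul, norm_pow, Real.norm_eq_abs,
          Real.norm_eq_abs, abs_of_pos (risingFactorial_pos hζ m), Real.norm_natCast,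
          Real.norm_of_nonneg (hΓpos.le.trans hΓ), div_div]
    _ ≤ ((ζ + 1) * (|y| + 1)) ^ m / (a ^ (ϑ - 1) * exp (-a) * B ^ m) :=
        div_le_div₀ (by positivity) hrf hΓpos hΓ
    _ = (a ^ (ϑ - 1) * exp (-a))⁻¹ * (1 / 2) ^ m := by
        rw [show B = 2 * ((ζ + 1) * (|y| + 1)) from rfl, mul_pow 2, one_div_pow]
        field_simp

noncomputable def fcpCoeff (μ ϑ ζ : ℝ) (m : ℕ) : ℝ :=
  Gamma ϑ * risingFactorial ζ m / Gamma (μ * m + ϑ)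

noncomputable def fcpTerm (μ ϑ ζ x : ℝ) (p : ℕ × ℕ) : ℝ :=
  fcpCoeff μ ϑ ζ (p.1 + p.2) * (x ^ p.1 / p.1 ! * ((-x) ^ p.2 / p.2 !))

section fcpTerm

variable {μ ϑ ζ : ℝ}

theorem fcpCoeff_zero (hϑ : 0 < ϑ) (hζ : 0 < ζ) : fcpCoeff μ ϑ ζ 0 = 1 := by
  simp [fcpCoeff, risingFactorial_zero hζ, (Gamma_pos_of_pos hϑ).ne']

theorem fcpCoeff_pos (hμ : 0 ≤ μ) (hϑ : 0 < ϑ) (hζ : 0 < ζ) (m : ℕ) :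
    0 < fcpCoeff μ ϑ ζ m :=
  div_pos (mul_pos (Gamma_pos_of_pos hϑ) (risingFactorial_pos hζ m))
    (Gamma_pos_of_pos (by positivity))

theorem fcpP_eq_tsum_fcpTerm (hζ : 0 < ζ) (θ lam : ℝ) (n : ℕ) (t : ℝ) :
    fcpP μ ϑ ζ θ lam n t = ∑' k, fcpTerm μ ϑ ζ (lam * t ^ θ) (n, k) := by
  rw [fcpP, ← tsum_mul_left]
  refine tsum_congr fun k => ?_
  rw [fcpTerm, fcpCoeff, ← risingFactorial_mul_risingFactorial_add hζ]
  push_cast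
  ring

theorem fcpTerm_zero_left (x : ℝ) (k : ℕ) :
    fcpTerm μ ϑ ζ x (0, k) = Gamma ϑ * mittagLefflerTerm μ ϑ ζ (-x) k := by
  simp only [fcpTerm, fcpCoeff, mittagLefflerTerm, zero_add, pow_zero,
    Nat.factorial_zero, Nat.cast_one]
  ring

theorem integral_fcpTerm_zero_left {Ω : Type*} [MeasurableSpace Ω] {P : Measure Ω}
    {H : Ω → ℝ} (hH : ∀ ω, 0 ≤ H ω) (θ lam : ℝ) (k : ℕ) :
    ∫ ω, fcpTerm μ ϑ ζ (lam * H ω ^ θ) (0, k) ∂P = Gamma ϑ *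
      ((-lam) ^ k * risingFactorial ζ k / (k ! * Gamma (μ * k + ϑ)) *
        ∫ ω, H ω ^ (θ * (k : ℝ)) ∂P) := by
  simp only [fcpTerm_zero_left, mittagLefflerTerm, ← integral_const_mul]
  refine integral_congr_ae (ae_of_all _ fun ω => ?_)
  dsimp only
  rw [rpow_mul_natCast (hH ω), neg_mul_eq_neg_mul, mul_pow]
  ring

theorem sum_antidiagonal_fcpTerm (x : ℝ) (m : ℕ) :
    ∑ p ∈ antidiagonal m, fcpTerm μ ϑ ζ x p = fcpCoeff μ ϑ ζ m * (0 ^ m / m !) := by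
  rw [← add_neg_cancel x, ← sum_antidiagonal_pow_div_factorial_mul, mul_sum]
  exact sum_congr rfl fun p hp => by rw [fcpTerm, mem_antidiagonal.mp hp]

variable (hμ : 0 < μ) (hϑ : 0 < ϑ) (hζ : 0 < ζ)
include hμ hϑ hζ

theorem sum_antidiagonal_norm_fcpTerm (x : ℝ) (m : ℕ) :
    ∑ p ∈ antidiagonal m, ‖fcpTerm μ ϑ ζ x p‖ =
      Gamma ϑ * mittagLefflerTerm μ ϑ ζ (2 * |x|) m := by
  have hnorm : ∀ p ∈ antidiagonal m, ‖fcpTerm μ ϑ ζ x p‖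
      = fcpCoeff μ ϑ ζ m * (|x| ^ p.1 / p.1 ! * (|x| ^ p.2 / p.2 !)) := fun p hp => by
    rw [fcpTerm, mem_antidiagonal.mp hp, norm_mul, norm_mul, norm_div, norm_div, norm_pow,
      norm_pow, norm_neg, Real.norm_natCast, Real.norm_natCast,
      Real.norm_of_nonneg (fcpCoeff_pos hμ.le hϑ hζ m).le, Real.norm_eq_abs]
  rw [sum_congr rfl hnorm, ← mul_sum, sum_antidiagonal_pow_div_factorial_mul, ← two_mul,
    fcpCoeff, mittagLefflerTerm]
  field_simp

theorem summable_norm_fcpTerm (x : ℝ) : Summable fun p => ‖fcpTerm μ ϑ ζ x p‖ :=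
  summable_norm_of_summable_sum_norm_antidiagonal <| by
    simpa only [sum_antidiagonal_norm_fcpTerm hμ hϑ hζ] using
      (summable_mittagLefflerTerm hμ hζ ϑ (2 * |x|)).mul_left (Gamma ϑ)

theorem tsum_norm_fcpTerm (x : ℝ) :
    ∑' p, ‖fcpTerm μ ϑ ζ x p‖ = Gamma ϑ * mittagLeffler μ ϑ ζ (2 * |x|) := by
  rw [mittagLeffler_eq_tsum, ← tsum_mul_left]
  refine (summable_norm_fcpTerm hμ hϑ hζ x).hasSum_sum_antidiagonal.unique ?_
  simpa only [sum_antidiagonal_norm_fcpTerm hμ hϑ hζ] using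
    ((summable_mittagLefflerTerm hμ hζ ϑ (2 * |x|)).mul_left (Gamma ϑ)).hasSum

theorem tsum_fcpTerm (x : ℝ) : ∑' p, fcpTerm μ ϑ ζ x p = 1 := by
  refine (summable_norm_fcpTerm hμ hϑ hζ x).of_norm.hasSum_sum_antidiagonal.unique ?_
  have hcollapse :
      ∀ m, ∑ p ∈ antidiagonal m, fcpTerm μ ϑ ζ x p = if m = 0 then 1 else 0 := by
    intro m
    rw [sum_antidiagonal_fcpTerm]
    rcases m with _ | m <;> simp [fcpCoeff_zero hϑ hζ]
  simpa only [hcollapse] using hasSum_ite_eq 0 (1 : ℝ)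

end fcpTerm

theorem tcfcp_pmf_sums_to_one_general {Ω : Type*} [MeasurableSpace Ω] (P : Measure Ω)
    [IsProbabilityMeasure P]
    (μ ϑ ζ θ lam : ℝ) (hμ : 0 < μ) (hζ : 0 < ζ) (hϑ : μ * ζ ≤ ϑ)
    (hlam : 0 < lam)
    (H : Ω → ℝ) (hHm : Measurable H) (hH0 : ∀ ω, 0 ≤ H ω)
    (hint : Integrable (fun ω => mittagLeffler μ ϑ ζ (2 * lam * H ω ^ θ)) P)
    (z : ℕ → ℝ) (hz : ∀ n, z n = ∫ ω, fcpP μ ϑ ζ θ lam n (H ω) ∂P) :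
    (∑' n : ℕ, z n = 1) ∧
    (1 - ∑' n : ℕ, z (n + 1) = z 0) ∧
    (z 0 = Real.Gamma ϑ * ∑' k : ℕ,
      (-lam) ^ k * risingFactorial ζ k / (k.factorial * Real.Gamma (μ * k + ϑ)) *
        ∫ ω, H ω ^ (θ * (k : ℝ)) ∂P) := by
  have hϑ0 : 0 < ϑ := (mul_pos hμ hζ).trans_le hϑ
  have habs : ∀ ω, |lam * H ω ^ θ| = lam * H ω ^ θ := fun ω =>
    abs_of_nonneg (mul_nonneg hlam.le (rpow_nonneg (hH0 ω) θ))
  set f : ℕ × ℕ → Ω → ℝ := fun p ω => fcpTerm μ ϑ ζ (lam * H ω ^ θ) p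
  have hf : ∀ p, AEStronglyMeasurable (f p) P := fun p => by
    simp only [f, fcpTerm]
    fun_prop
  have hs : ∀ ω, Summable fun p => ‖f p ω‖ := fun ω => summable_norm_fcpTerm hμ hϑ0 hζ _
  have hi : Integrable (fun ω => ∑' p, ‖f p ω‖) P := by
    simpa only [f, tsum_norm_fcpTerm hμ hϑ0 hζ, habs, mul_assoc] using hint.const_mul (Gamma ϑ)
  have hrow : ∀ n ω, fcpP μ ϑ ζ θ lam n (H ω) = ∑' k, f (n, k) ω :=
    fun n ω => fcpP_eq_tsum_fcpTerm hζ θ lam n (H ω)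
  have hz_sum : HasSum z 1 := by
    simpa only [← hrow, ← hz, f, tsum_fcpTerm hμ hϑ0 hζ, integral_const, probReal_univ,
      smul_eq_mul, mul_one] using hasSum_integral_tsum_row hf hs hi
  refine ⟨hz_sum.tsum_eq, ?_, ?_⟩
  · linarith [hz_sum.summable.tsum_eq_zero_add, hz_sum.tsum_eq]
  · simp only [hz 0, hrow, ← tsum_mul_left, ← (hasSum_integral_row hf hs hi 0).tsum_eq, f,
      integral_fcpTerm_zero_left hH0]

/-- The TCFCP pmf `z(n) = 𝔼[P(n,H)]` satisfies `∑_n z(n) = 1`, hence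
`1 − ∑_{n≥1} z(n) = z(0) = Γ(ϑ) ∑_k (−λ)^k (ζ)_k/(k! Γ(μk+ϑ)) 𝔼[H^{θk}]`. -/
theorem tcfcp_pmf_sums_to_one {Ω : Type*} [MeasurableSpace Ω] (P : Measure Ω)
    [IsProbabilityMeasure P]
    (μ ϑ ζ θ lam : ℝ) (hμ : 0 < μ) (hμ1 : μ ≤ 1) (hζ : 0 < ζ) (hϑ : μ * ζ ≤ ϑ)
    (hθ : 0 < θ) (hθ1 : θ ≤ 1) (hlam : 0 < lam)
    (H : Ω → ℝ) (hHm : Measurable H) (hH0 : ∀ ω, 0 ≤ H ω)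
    (hint : Integrable (fun ω => mittagLeffler μ ϑ ζ (2 * lam * H ω ^ θ)) P)
    (z : ℕ → ℝ) (hz : ∀ n, z n = ∫ ω, fcpP μ ϑ ζ θ lam n (H ω) ∂P) :
    (∑' n : ℕ, z n = 1) ∧
    (1 - ∑' n : ℕ, z (n + 1) = z 0) ∧
    (z 0 = Real.Gamma ϑ * ∑' k : ℕ,
      (-lam) ^ k * risingFactorial ζ k / (k.factorial * Real.Gamma (μ * k + ϑ)) *
        ∫ ω, H ω ^ (θ * (k : ℝ)) ∂P) :=
  tcfcp_pmf_sums_to_one_general P μ ϑ ζ θ lam hμ hζ hϑ hlam H hHm hH0 hint z hz
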